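/- Let M be a module over the Boolean semifield 𝔹 and N a saturated submodule of M. Then N is a compact element of the lattice S(M) of saturated submodules of M (ordered by inclusion) if and only if N = {a ∈ M | a ≤ b} for some b ∈ M, where a ≤ b means a + b = b. -/

import Mathlib

/-- A submonoid (submodule) `N` of a `𝔹`-module `M` (an idempotent commutative
monoid) is *saturated* if `x + y ∈ N` and `y ∈ N` imply `x ∈ N`. -/
def SatAdd {M : Type*} [AddCommMonoid M] (N : AddSubmonoid M) : Prop :=
  ∀ x y : M, x + y ∈ N → y ∈ N → x ∈ N

/-- The saturation closure of a submodule `S` of a `𝔹`-module: the smallest saturated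
submodule containing `S`, explicitly `{x | ∃ y ∈ S, x + y ∈ S}`. -/
def satClosure {M : Type*} [AddCommMonoid M] (S : AddSubmonoid M) : AddSubmonoid M where
  carrier := {x : M | ∃ y ∈ S, x + y ∈ S}
  zero_mem' := ⟨0, S.zero_mem, by simpa using S.zero_mem⟩
  add_mem' := by
    rintro a b ⟨y, hy, hay⟩ ⟨y', hy', hby'⟩
    exact ⟨y + y', S.add_mem hy hy', by
      rw [add_add_add_comm]; exact S.add_mem hay hby'⟩

universe u

lemma satClosure_le {M : Type*} [AddCommMonoid M] {S T : AddSubmonoid M}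
    (hT : SatAdd T) (h : S ≤ T) : satClosure S ≤ T := by
  rintro x ⟨y, hy, hxy⟩
  exact hT x y (h hxy) (h hy)

lemma le_satClosure {M : Type*} [AddCommMonoid M] (S : AddSubmonoid M) : S ≤ satClosure S :=
  fun x hx => ⟨0, S.zero_mem, by simpa using hx⟩

lemma mem_iSup_finset {M : Type*} [AddCommMonoid M] {ι : Type*} (K : ι → AddSubmonoid M)
    {x : M} (hx : x ∈ ⨆ i, K i) : ∃ t : Finset ι, x ∈ ⨆ i ∈ t, K i := by
  classical
  refine AddSubmonoid.iSup_induction (motive := fun z => ∃ t : Finset ι, z ∈ ⨆ i ∈ t, K i)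
    K hx (fun i z hz => ⟨{i}, ?_⟩) ⟨∅, zero_mem _⟩ ?_
  · exact le_iSup₂ (f := fun j (_ : j ∈ ({i} : Finset ι)) => K j) i (Finset.mem_singleton_self i) hz
  · rintro a b ⟨t1, h1⟩ ⟨t2, h2⟩
    have m1 : (⨆ i ∈ t1, K i) ≤ ⨆ i ∈ t1 ∪ t2, K i :=
      biSup_mono fun i hi => Finset.mem_union_left _ hi
    have m2 : (⨆ i ∈ t2, K i) ≤ ⨆ i ∈ t1 ∪ t2, K i :=
      biSup_mono fun i hi => Finset.mem_union_right _ hi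
    exact ⟨t1 ∪ t2, add_mem (m1 h1) (m2 h2)⟩

/-- The principal down-set of `b` as a submonoid. -/
def downSet {M : Type*} [AddCommMonoid M] (b : M) : AddSubmonoid M where
  carrier := {a | a + b = b}
  zero_mem' := by simp
  add_mem' := by
    intro x y hx hy
    simp only [Set.mem_setOf_eq] at *
    rw [add_assoc, hy, hx]

lemma satAdd_downSet {M : Type*} [AddCommMonoid M] (b : M) : SatAdd (downSet b) := by
  intro x y hxy hy
  show x + b = b
  calc x + b = x + (y + b) := by rw [hy]
  _ = (x + y) + b := by rw [add_assoc]
  _ = b := hxy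

/-- Let `M` be a `𝔹`-module (idempotent commutative monoid, ordered by
`a ≤ b ↔ a + b = b`) and `N` a saturated submodule. Then `N` is a compact element of
the lattice `S(M)` of saturated submodules (joins being saturation closures of
generated submodules) iff `N = {a ∈ M | a + b = b}` for some `b ∈ M`. -/
theorem stmt12 {M : Type u} [AddCommMonoid M] (hM : ∀ x : M, x + x = x)
    (N : AddSubmonoid M) (hN : SatAdd N) :
    (∀ (ι : Type u) (K : ι → AddSubmonoid M), (∀ i, SatAdd (K i)) →
        N ≤ satClosure (⨆ i, K i) →
        ∃ t : Finset ι, N ≤ satClosure (⨆ i ∈ t, K i)) ↔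
    ∃ b : M, (N : Set M) = {a : M | a + b = b} := by
  classical
  constructor
  · intro hcomp
    have hNle : N ≤ satClosure (⨆ b : N, downSet (b : M)) := by
      refine le_trans ?_ (le_satClosure _)
      intro a ha
      exact le_iSup (fun b : N => downSet (b : M)) ⟨a, ha⟩ (hM a)
    obtain ⟨t, ht⟩ := hcomp N (fun b => downSet (b : M)) (fun b => satAdd_downSet _) hNle
    set b₀ : M := ∑ b ∈ t, (b : M) with hb₀def
    have hb₀N : b₀ ∈ N := AddSubmonoid.sum_mem N (fun b _ => b.2)
    have hle : satClosure (⨆ b ∈ t, downSet (b : M)) ≤ downSet b₀ := by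
      refine satClosure_le (satAdd_downSet b₀) (iSup₂_le fun b hb => ?_)
      intro a hab
      have hsum : (b : M) + ∑ x ∈ t.erase b, (x : M) = b₀ := Finset.add_sum_erase t _ hb
      show a + b₀ = b₀
      calc a + b₀ = (a + b) + ∑ x ∈ t.erase b, (x : M) := by rw [← hsum, ← add_assoc]
      _ = (b : M) + ∑ x ∈ t.erase b, (x : M) := by rw [hab]
      _ = b₀ := hsum
    refine ⟨b₀, Set.Subset.antisymm (fun a ha => hle (ht ha)) fun a ha => ?_⟩
    exact hN a b₀ (by simp only [Set.mem_setOf_eq] at ha; rw [ha]; exact hb₀N) hb₀N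
  · rintro ⟨b, hb⟩ ι K hK hNle
    have hbN : b ∈ N := by
      have : b ∈ (N : Set M) := by rw [hb]; exact hM b
      exact this
    obtain ⟨y, hy, hby⟩ := hNle hbN
    obtain ⟨t1, ht1⟩ := mem_iSup_finset K hy
    obtain ⟨t2, ht2⟩ := mem_iSup_finset K hby
    refine ⟨t1 ∪ t2, fun a ha => ?_⟩
    have hab : a + b = b := by
      have : a ∈ (N : Set M) := ha
      rwa [hb] at this
    have m1 : (⨆ i ∈ t1, K i) ≤ ⨆ i ∈ t1 ∪ t2, K i :=
      biSup_mono fun i hi => Finset.mem_union_left _ hi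
    have m2 : (⨆ i ∈ t2, K i) ≤ ⨆ i ∈ t1 ∪ t2, K i :=
      biSup_mono fun i hi => Finset.mem_union_right _ hi
    have hby' : b + y ∈ ⨆ i ∈ t1 ∪ t2, K i := m2 ht2
    exact ⟨b + y, hby', by rw [← add_assoc, hab]; exact hby'⟩
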